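/- Let d ≥ 2 and p ∈ [0,1]. The map W_p ⊗ (ϑ ∘ W_p) : M_d(ℂ) ⊗ M_d(ℂ) → M_d(ℂ) ⊗ M_d(ℂ) is decomposable if and only if p ≥ 1/(2 + √(2d/(d+1))). -/

import Mathlib

open scoped ComplexOrder Kronecker Matrix

namespace TensorDecomp

/-- The Choi matrix of a linear map between matrix algebras. -/
noncomputable def choi {A B : Type} [Fintype A] [DecidableEq A]
    (L : Matrix A A ℂ →ₗ[ℂ] Matrix B B ℂ) : Matrix (A × B) (A × B) ℂ :=
  fun p q => L (Matrix.single p.1 q.1 1) p.2 q.2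

/-- A map is positive if it maps positive semidefinite matrices to positive
semidefinite matrices. -/
def IsPositiveMap {A B : Type} [Fintype A] [Fintype B]
    (L : Matrix A A ℂ →ₗ[ℂ] Matrix B B ℂ) : Prop :=
  ∀ X : Matrix A A ℂ, X.PosSemidef → (L X).PosSemidef

/-- A map is completely positive iff its Choi matrix is positive semidefinite. -/
def IsCompletelyPositive {A B : Type} [Fintype A] [DecidableEq A] [Fintype B]
    (L : Matrix A A ℂ →ₗ[ℂ] Matrix B B ℂ) : Prop :=
  (choi L).PosSemidef

/-- Matrix transposition as a linear map. -/
def transposeMap (A : Type) : Matrix A A ℂ →ₗ[ℂ] Matrix A A ℂ where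
  toFun X := X.transpose
  map_add' X Y := Matrix.transpose_add X Y
  map_smul' c X := Matrix.transpose_smul c X

/-- A map is completely copositive iff transposition composed with it is
completely positive. -/
def IsCompletelyCopositive {A B : Type} [Fintype A] [DecidableEq A] [Fintype B]
    (L : Matrix A A ℂ →ₗ[ℂ] Matrix B B ℂ) : Prop :=
  IsCompletelyPositive (transposeMap B ∘ₗ L)

/-- A map is decomposable iff it is the sum of a completely positive map and the
transposition composed with a completely positive map. -/
def IsDecomposable {A B : Type} [Fintype A] [DecidableEq A] [Fintype B]
    (L : Matrix A A ℂ →ₗ[ℂ] Matrix B B ℂ) : Prop :=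
  ∃ T₁ T₂ : Matrix A A ℂ →ₗ[ℂ] Matrix B B ℂ,
    IsCompletelyPositive T₁ ∧ IsCompletelyPositive T₂ ∧ L = T₁ + transposeMap B ∘ₗ T₂

/-- The tensor product of a finite family of linear maps between matrix algebras,
characterized by `(⊗ₜ L t) (⊗ₜ X t) = ⊗ₜ (L t (X t))`. -/
noncomputable def mapTensorFamily {ι : Type} [Fintype ι] [DecidableEq ι]
    {κ κ' : Type} [Fintype κ] [DecidableEq κ]
    (L : ι → (Matrix κ κ ℂ →ₗ[ℂ] Matrix κ' κ' ℂ)) :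
    Matrix (ι → κ) (ι → κ) ℂ →ₗ[ℂ] Matrix (ι → κ') (ι → κ') ℂ where
  toFun X := fun k l => ∑ i : ι → κ, ∑ j : ι → κ,
    X i j * ∏ t, L t (Matrix.single (i t) (j t) 1) (k t) (l t)
  map_add' X Y := by
    funext k l
    change _ = (_ : ℂ) + _
    simp [Matrix.add_apply, add_mul, Finset.sum_add_distrib]
  map_smul' c X := by
    funext k l
    change _ = c * _
    simp [Matrix.smul_apply, smul_eq_mul, Finset.mul_sum, mul_assoc]

/-- The `n`-th tensor power of a linear map between matrix algebras. -/
noncomputable def mapTensorPow {κ κ' : Type} [Fintype κ] [DecidableEq κ]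
    (L : Matrix κ κ ℂ →ₗ[ℂ] Matrix κ' κ' ℂ) (n : ℕ) :
    Matrix (Fin n → κ) (Fin n → κ) ℂ →ₗ[ℂ] Matrix (Fin n → κ') (Fin n → κ') ℂ :=
  mapTensorFamily (fun _ : Fin n => L)

/-- The tensor product of two linear maps between matrix algebras, characterized by
`(L₁ ⊗ L₂)(X ⊗ Y) = L₁(X) ⊗ L₂(Y)`. -/
noncomputable def mapTensor {A B C D : Type} [Fintype A] [DecidableEq A]
    [Fintype C] [DecidableEq C]
    (L₁ : Matrix A A ℂ →ₗ[ℂ] Matrix B B ℂ) (L₂ : Matrix C C ℂ →ₗ[ℂ] Matrix D D ℂ) :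
    Matrix (A × C) (A × C) ℂ →ₗ[ℂ] Matrix (B × D) (B × D) ℂ where
  toFun X := fun k l => ∑ i : A × C, ∑ j : A × C,
    X i j * (L₁ (Matrix.single i.1 j.1 1) k.1 l.1 *
      L₂ (Matrix.single i.2 j.2 1) k.2 l.2)
  map_add' X Y := by
    funext k l
    change _ = (_ : ℂ) + _
    simp [Matrix.add_apply, add_mul, Finset.sum_add_distrib]
  map_smul' c X := by
    funext k l
    change _ = c * _
    simp [Matrix.smul_apply, smul_eq_mul, Finset.mul_sum, mul_assoc]

/-- The adjoint of a linear map between matrix algebras with respect to the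
Hilbert-Schmidt inner product `⟨A, B⟩ = Tr[Aᴴ B]`. -/
noncomputable def hsAdjoint {A B : Type} [Fintype A] [DecidableEq A] [Fintype B]
    (T : Matrix A A ℂ →ₗ[ℂ] Matrix B B ℂ) : Matrix B B ℂ →ₗ[ℂ] Matrix A A ℂ where
  toFun Y := fun i j => ((T (Matrix.single i j 1))ᴴ * Y).trace
  map_add' X Y := by
    funext i j
    change _ = (_ : ℂ) + _
    simp [Matrix.mul_add, Matrix.add_apply]
  map_smul' c X := by
    funext i j
    change _ = c * _
    simp [Matrix.mul_smul, Matrix.smul_apply]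

/-- The quantity `μ(P)` from Definition 2 of the paper. -/
noncomputable def mu {A B : Type} [Fintype A] [DecidableEq A] [Fintype B] [DecidableEq B]
    (P : Matrix A A ℂ →ₗ[ℂ] Matrix B B ℂ) : ℝ :=
  sInf { r : ℝ | ∃ T : Matrix A A ℂ →ₗ[ℂ] Matrix B B ℂ,
    IsCompletelyPositive T ∧ hsAdjoint T (P 1) ≠ 0 ∧
    r = ((choi P * choi T).trace).re / ((hsAdjoint T (P 1)).trace).re }

/-- The unique linear map with the given Choi matrix. -/
noncomputable def ofChoi {A B : Type} [Fintype A] [Fintype B]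
    (C : Matrix (A × B) (A × B) ℂ) : Matrix A A ℂ →ₗ[ℂ] Matrix B B ℂ where
  toFun X := fun k l => ∑ i : A, ∑ j : A, X i j * C (i, k) (j, l)
  map_add' X Y := by
    funext k l
    change _ = (_ : ℂ) + _
    simp [Matrix.add_apply, add_mul, Finset.sum_add_distrib]
  map_smul' c X := by
    funext k l
    change _ = c * _
    simp [Matrix.smul_apply, smul_eq_mul, Finset.mul_sum, mul_assoc]

/-- The flip operator on `ℂ^d ⊗ ℂ^d`. -/
def flipOp (d : ℕ) : Matrix (Fin d × Fin d) (Fin d × Fin d) ℂ :=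
  fun p q => if p.1 = q.2 ∧ p.2 = q.1 then 1 else 0

/-- The projection onto the symmetric subspace of `ℂ^d ⊗ ℂ^d`. -/
noncomputable def Psym (d : ℕ) : Matrix (Fin d × Fin d) (Fin d × Fin d) ℂ :=
  (1 / 2 : ℂ) • (1 + flipOp d)

/-- The projection onto the antisymmetric subspace of `ℂ^d ⊗ ℂ^d`. -/
noncomputable def Pasym (d : ℕ) : Matrix (Fin d × Fin d) (Fin d × Fin d) ℂ :=
  (1 / 2 : ℂ) • (1 - flipOp d)

/-- The (unnormalized to trace one) Werner state with parameter `p`. -/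
noncomputable def wernerState (d : ℕ) (p : ℝ) :
    Matrix (Fin d × Fin d) (Fin d × Fin d) ℂ :=
  ((p : ℂ) / ((d : ℂ) * ((d : ℂ) + 1) / 2)) • Psym d +
    (((1 - p : ℝ) : ℂ) / ((d : ℂ) * ((d : ℂ) - 1) / 2)) • Pasym d

/-- The Werner map `W_p`, i.e. the unique linear map whose Choi matrix is the
Werner state `ρ_W(p)`. -/
noncomputable def wernerMap (d : ℕ) (p : ℝ) :
    Matrix (Fin d) (Fin d) ℂ →ₗ[ℂ] Matrix (Fin d) (Fin d) ℂ :=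
  ofChoi (wernerState d p)

/-- Partial transposition (on the second tensor factor) of a bipartite matrix. -/
def ptranspose {A B : Type} (X : Matrix (A × B) (A × B) ℂ) :
    Matrix (A × B) (A × B) ℂ :=
  fun p q => X (p.1, q.2) (q.1, p.2)

/-- Partial transposition of all `B`-systems of a multipartite matrix whose
subsystems each consist of an `A`-part (first factor) and a `B`-part (second factor). -/
def ptransposeAll {ι A B : Type} (X : Matrix (ι → A × B) (ι → A × B) ℂ) :
    Matrix (ι → A × B) (ι → A × B) ℂ :=
  fun p q => X (fun t => ((p t).1, (q t).2)) (fun t => ((q t).1, (p t).2))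

/-- The tensor product of a finite family of matrices. -/
def tensorFamily {ι : Type} [Fintype ι] {κ : Type} (M : ι → Matrix κ κ ℂ) :
    Matrix (ι → κ) (ι → κ) ℂ :=
  fun p q => ∏ t, M t (p t) (q t)

/-- The normalized projections `P₀ = P_sym / d_sym` and `P₁ = P_asym / d_asym`. -/
noncomputable def Pnorm (d : ℕ) : Fin 2 → Matrix (Fin d × Fin d) (Fin d × Fin d) ℂ :=
  ![((d : ℂ) * ((d : ℂ) + 1) / 2)⁻¹ • Psym d, ((d : ℂ) * ((d : ℂ) - 1) / 2)⁻¹ • Pasym d]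

/-- The matrices `F(k,l)` from equation (10) of the paper (with `k, l` 0-based). -/
noncomputable def Fmat (d n m : ℕ) (k : Fin (n + 1)) (l : Fin (m + 1)) :
    Matrix ((Fin n ⊕ Fin m) → Fin d × Fin d) ((Fin n ⊕ Fin m) → Fin d × Fin d) ℂ :=
  ((Nat.factorial n * Nat.factorial m : ℂ))⁻¹ • ∑ f : (Fin n ⊕ Fin m) → Fin 2,
    if (∑ t : Fin n, ((f (Sum.inl t)) : ℕ)) = (k : ℕ) ∧
        (∑ s : Fin m, ((f (Sum.inr s)) : ℕ)) = (l : ℕ) then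
      tensorFamily (fun t => match t with
        | Sum.inl _ => Pnorm d (f t)
        | Sum.inr _ => ptranspose (Pnorm d (f t)))
    else 0

/-- The matrix `H_Q` from equation (9) of the paper (with indices 0-based). -/
noncomputable def HQ (d n m : ℕ) (Q : Matrix (Fin (n + 1)) (Fin (m + 1)) ℝ) :
    Matrix ((Fin n ⊕ Fin m) → Fin d × Fin d) ((Fin n ⊕ Fin m) → Fin d × Fin d) ℂ :=
  ∑ k : Fin (n + 1), ∑ l : Fin (m + 1), (Q k l : ℂ) • Fmat d n m k l

/-- The matrix `V^m_d` from equation (8) of the paper (with indices 0-based). -/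
noncomputable def Vmat (m d : ℕ) : Matrix (Fin (m + 1)) (Fin (m + 1)) ℝ :=
  fun a b => (-1 : ℝ) ^ (a : ℕ) *
    ∑ t ∈ Finset.Icc ((a : ℕ) + (b : ℕ) - m) (min (a : ℕ) (b : ℕ)),
      ((a : ℕ).choose t : ℝ) * ((m - (a : ℕ)).choose ((b : ℕ) - t) : ℝ) *
        (-(((d : ℝ) + 1) / ((d : ℝ) - 1))) ^ t

/-- The vector `v^n_p` from equation (12) of the paper (with index 0-based). -/
noncomputable def vvec (d n : ℕ) (p : ℝ) : Fin (n + 1) → ℝ :=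
  fun k => (((d : ℝ) + 1) / ((d : ℝ) - 1)) ^ (k : ℕ) * (1 - p) ^ (k : ℕ) * p ^ (n - (k : ℕ))

/-- The mixed tensor power `W_{p₁}^{⊗n} ⊗ (ϑ ∘ W_{p₂})^{⊗m}` of Werner maps. -/
noncomputable def wernerMixed (d n m : ℕ) (p₁ p₂ : ℝ) :
    Matrix ((Fin n ⊕ Fin m) → Fin d) ((Fin n ⊕ Fin m) → Fin d) ℂ →ₗ[ℂ]
      Matrix ((Fin n ⊕ Fin m) → Fin d) ((Fin n ⊕ Fin m) → Fin d) ℂ :=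
  mapTensorFamily (fun t => match t with
    | Sum.inl _ => wernerMap d p₁
    | Sum.inr _ => transposeMap (Fin d) ∘ₗ wernerMap d p₂)

-- AUX1 BEGIN
section Aux

set_option linter.unusedSectionVars false

open Matrix

variable {A B C D : Type} [Fintype A] [DecidableEq A] [Fintype B] [DecidableEq B]
  [Fintype C] [DecidableEq C] [Fintype D] [DecidableEq D]

lemma choi_ofChoi (M : Matrix (A × B) (A × B) ℂ) : choi (ofChoi M) = M := by
  funext p q
  change (∑ i, ∑ j, Matrix.single p.1 q.1 (1:ℂ) i j * M (i, p.2) (j, q.2)) = M p q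
  simp [choi, ofChoi, Matrix.single, Matrix.of_apply, ite_and, ite_mul,
    one_mul, zero_mul, Finset.sum_ite_irrel, Finset.sum_const_zero, Finset.sum_ite_eq]

lemma ofChoi_choi (L : Matrix A A ℂ →ₗ[ℂ] Matrix B B ℂ) : ofChoi (choi L) = L := by
  apply LinearMap.ext; intro X
  funext k l
  simp only [ofChoi, choi, LinearMap.coe_mk, AddHom.coe_mk]
  conv_rhs => rw [Matrix.matrix_eq_sum_single X]
  rw [map_sum, Matrix.sum_apply]
  refine Finset.sum_congr rfl fun i _ => ?_
  rw [map_sum, Matrix.sum_apply]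
  refine Finset.sum_congr rfl fun j _ => ?_
  have h : Matrix.single i j (X i j) = X i j • Matrix.single i j 1 := by
    rw [Matrix.smul_single, smul_eq_mul, mul_one]
  rw [h, L.map_smul, Matrix.smul_apply, smul_eq_mul]

lemma choi_add (P Q : Matrix A A ℂ →ₗ[ℂ] Matrix B B ℂ) :
    choi (P + Q) = choi P + choi Q := by
  funext p q
  simp [choi]

lemma choi_transpose_comp (L : Matrix A A ℂ →ₗ[ℂ] Matrix B B ℂ) :
    choi (transposeMap B ∘ₗ L) = ptranspose (choi L) := by
  funext p q
  simp [choi, ptranspose, transposeMap]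

/-- Kronecker-type product placing factors as (input,input),(output,output). -/
def K (U : Matrix (A × B) (A × B) ℂ) (V : Matrix (C × D) (C × D) ℂ) :
    Matrix ((A × C) × (B × D)) ((A × C) × (B × D)) ℂ :=
  fun p q => U (p.1.1, p.2.1) (q.1.1, q.2.1) * V (p.1.2, p.2.2) (q.1.2, q.2.2)

lemma choi_mapTensor (L₁ : Matrix A A ℂ →ₗ[ℂ] Matrix B B ℂ)
    (L₂ : Matrix C C ℂ →ₗ[ℂ] Matrix D D ℂ) :
    choi (mapTensor L₁ L₂) = K (choi L₁) (choi L₂) := by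
  funext p q
  simp only [choi, mapTensor, LinearMap.coe_mk, AddHom.coe_mk, K]
  change (∑ i : A × C, ∑ j : A × C, Matrix.single p.1 q.1 (1:ℂ) i j *
    (L₁ (Matrix.single i.1 j.1 1) p.2.1 q.2.1 * L₂ (Matrix.single i.2 j.2 1) p.2.2 q.2.2)) = _
  rw [show (Matrix.single p.1 q.1 (1:ℂ)) =
    fun i j => if p.1 = i ∧ q.1 = j then (1:ℂ) else 0 from rfl]
  simp [ite_and, ite_mul, one_mul, zero_mul, Finset.sum_ite_irrel,
    Finset.sum_const_zero, Finset.sum_ite_eq]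

lemma K_mul (U U' : Matrix (A × B) (A × B) ℂ) (V V' : Matrix (C × D) (C × D) ℂ) :
    K U V * K U' V' = K (U * U') (V * V') := by
  funext p q
  simp only [Matrix.mul_apply, K]
  rw [Fintype.sum_mul_sum]
  simp only [Fintype.sum_prod_type]
  refine Finset.sum_congr rfl fun a _ => ?_
  rw [Finset.sum_comm]
  refine Finset.sum_congr rfl fun c _ => Finset.sum_congr rfl fun b _ =>
    Finset.sum_congr rfl fun e _ => ?_
  ring

lemma K_trace (U : Matrix (A × B) (A × B) ℂ) (V : Matrix (C × D) (C × D) ℂ) :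
    (K U V).trace = U.trace * V.trace := by
  simp only [Matrix.trace, Matrix.diag, K]
  rw [Fintype.sum_mul_sum]
  simp only [Fintype.sum_prod_type]
  refine Finset.sum_congr rfl fun a _ => ?_
  rw [Finset.sum_comm]

lemma K_conjTranspose (U : Matrix (A × B) (A × B) ℂ) (V : Matrix (C × D) (C × D) ℂ) :
    (K U V)ᴴ = K Uᴴ Vᴴ := by
  funext p q
  simp [K, Matrix.conjTranspose_apply, star_mul']

open scoped MatrixOrder in
lemma psd_eq_ct {n : Type} [Fintype n] {M : Matrix n n ℂ} (h : M.PosSemidef) :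
    ∃ B : Matrix n n ℂ, M = Bᴴ * B := by
  classical
  obtain ⟨B, hB⟩ := CStarAlgebra.nonneg_iff_eq_star_mul_self.mp h.nonneg
  exact ⟨B, hB⟩

lemma K_posSemidef {U : Matrix (A × B) (A × B) ℂ} {V : Matrix (C × D) (C × D) ℂ}
    (hU : U.PosSemidef) (hV : V.PosSemidef) : (K U V).PosSemidef := by
  obtain ⟨U', rfl⟩ := psd_eq_ct hU
  obtain ⟨V', rfl⟩ := psd_eq_ct hV
  rw [← K_mul, ← K_conjTranspose]
  exact Matrix.posSemidef_conjTranspose_mul_self _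

lemma ptranspose_K (U : Matrix (A × B) (A × B) ℂ) (V : Matrix (C × D) (C × D) ℂ) :
    ptranspose (K U V) = K (ptranspose U) (ptranspose V) := by
  funext p q
  simp [K, ptranspose]

lemma ptranspose_add (M N : Matrix (A × B) (A × B) ℂ) :
    ptranspose (M + N) = ptranspose M + ptranspose N := rfl

lemma ptranspose_smul (c : ℂ) (M : Matrix (A × B) (A × B) ℂ) :
    ptranspose (c • M) = c • ptranspose M := rfl

lemma trace_ptranspose_mul (M N : Matrix (A × B) (A × B) ℂ) :
    (ptranspose M * N).trace = (M * ptranspose N).trace := by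
  rw [Matrix.trace, Matrix.trace]
  simp only [Matrix.diag, Matrix.mul_apply, ptranspose]
  simp only [← Fintype.sum_prod_type']
  exact Fintype.sum_equiv
    ⟨fun u => ((u.1.1, u.2.2), (u.2.1, u.1.2)), fun u => ((u.1.1, u.2.2), (u.2.1, u.1.2)),
      fun u => rfl, fun u => rfl⟩ _ _ fun u => rfl

lemma trace_mul_nonneg {n : Type} [Fintype n] [DecidableEq n] {P Q : Matrix n n ℂ}
    (hP : P.PosSemidef) (hQ : Q.PosSemidef) : 0 ≤ (P * Q).trace := by
  obtain ⟨Cm, rfl⟩ := psd_eq_ct hQ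
  rw [← Matrix.mul_assoc, Matrix.trace_mul_cycle]
  have hpsd : (Cm * P * Cmᴴ).PosSemidef := hP.mul_mul_conjTranspose_same Cm
  have h : ∀ i, 0 ≤ (Cm * P * Cmᴴ) i i := fun i => by
    exact hpsd.diag_nonneg
  exact Finset.sum_nonneg fun i _ => h i

lemma psd_of_sq {n : Type} [Fintype n] {M : Matrix n n ℂ} (hH : Mᴴ = M)
    {κ : ℝ} (hκ : 0 < κ) (hsq : M * M = (κ : ℂ) • M) : M.PosSemidef := by
  set c : ℂ := (((Real.sqrt κ)⁻¹ : ℝ) : ℂ) with hc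
  have key : (c • M)ᴴ * (c • M) = M := by
    rw [Matrix.conjTranspose_smul, hH, Matrix.smul_mul, Matrix.mul_smul, hsq,
      smul_smul, smul_smul]
    have hs : star c * c * (κ : ℂ) = 1 := by
      rw [hc, Complex.star_def, Complex.conj_ofReal, ← Complex.ofReal_mul,
        ← Complex.ofReal_mul, ← mul_inv, Real.mul_self_sqrt hκ.le,
        inv_mul_cancel₀ (ne_of_gt hκ)]
      norm_num
    rw [hs, one_smul]
  rw [← key]
  exact Matrix.posSemidef_conjTranspose_mul_self _

end Aux
-- AUX1 END

-- AUX2 BEGIN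
noncomputable section Aux2

open Matrix

variable (d : ℕ)

/-- The unnormalized projector `d·P_Ω` (entrywise `δ_{p₁p₂} δ_{q₁q₂}`). -/
def Gm : Matrix (Fin d × Fin d) (Fin d × Fin d) ℂ :=
  fun p q => if p.1 = p.2 ∧ q.1 = q.2 then 1 else 0

def SymM : Matrix (Fin d × Fin d) (Fin d × Fin d) ℂ := 1 + flipOp d
def AsymM : Matrix (Fin d × Fin d) (Fin d × Fin d) ℂ := 1 - flipOp d
def GcM : Matrix (Fin d × Fin d) (Fin d × Fin d) ℂ := (d : ℂ) • 1 - Gm d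

lemma flip_herm : (flipOp d)ᴴ = flipOp d := by
  funext p q
  simp only [Matrix.conjTranspose_apply, flipOp]
  by_cases h : p.1 = q.2 ∧ p.2 = q.1
  · have h' : q.1 = p.2 ∧ q.2 = p.1 := ⟨h.2.symm, h.1.symm⟩
    rw [if_pos h', if_pos h, star_one]
  · have h' : ¬(q.1 = p.2 ∧ q.2 = p.1) := fun hc => h ⟨hc.2.symm, hc.1.symm⟩
    rw [if_neg h', if_neg h, star_zero]

lemma Gm_herm : (Gm d)ᴴ = Gm d := by
  funext p q
  simp only [Matrix.conjTranspose_apply, Gm]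
  by_cases h : p.1 = p.2 ∧ q.1 = q.2
  · have h' : q.1 = q.2 ∧ p.1 = p.2 := ⟨h.2, h.1⟩
    rw [if_pos h', if_pos h, star_one]
  · have h' : ¬(q.1 = q.2 ∧ p.1 = p.2) := fun hc => h ⟨hc.2, hc.1⟩
    rw [if_neg h', if_neg h, star_zero]

lemma flip_mul_flip : flipOp d * flipOp d = 1 := by
  funext p q
  simp only [Matrix.mul_apply, flipOp, Matrix.one_apply, Fintype.sum_prod_type, ite_and,
    ite_mul, one_mul, zero_mul, Finset.sum_ite_irrel, Finset.sum_const_zero,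
    Finset.sum_ite_eq, Finset.sum_ite_eq', Finset.mem_univ, if_true, Prod.ext_iff]
  by_cases h1 : p.1 = q.1 <;> by_cases h2 : p.2 = q.2 <;> simp [h1, h2, eq_comm]

lemma flip_mul_Gm : flipOp d * Gm d = Gm d := by
  funext p q
  simp only [Matrix.mul_apply, flipOp, Gm, Fintype.sum_prod_type, ite_and,
    ite_mul, one_mul, zero_mul, Finset.sum_ite_irrel, Finset.sum_const_zero,
    Finset.sum_ite_eq, Finset.sum_ite_eq', Finset.mem_univ, if_true]
  by_cases h1 : p.1 = p.2 <;> by_cases h2 : q.1 = q.2 <;> simp [h1, h2, eq_comm]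

lemma Gm_mul_flip : Gm d * flipOp d = Gm d := by
  funext p q
  simp only [Matrix.mul_apply, flipOp, Gm, Fintype.sum_prod_type, ite_and,
    ite_mul, one_mul, zero_mul, Finset.sum_ite_irrel, Finset.sum_const_zero,
    Finset.sum_ite_eq, Finset.sum_ite_eq', Finset.mem_univ, if_true]
  by_cases h1 : p.1 = p.2 <;> by_cases h2 : q.1 = q.2 <;> simp [h1, h2, eq_comm]

lemma Gm_mul_Gm : Gm d * Gm d = (d : ℂ) • Gm d := by
  funext p q
  simp only [Matrix.mul_apply, Gm, Matrix.smul_apply, Fintype.sum_prod_type, ite_and,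
    ite_mul, one_mul, zero_mul, Finset.sum_ite_irrel, Finset.sum_const_zero,
    Finset.sum_ite_eq, Finset.sum_ite_eq', Finset.mem_univ, if_true, smul_eq_mul]
  by_cases h1 : p.1 = p.2 <;> by_cases h2 : q.1 = q.2 <;>
    simp [h1, h2, Finset.sum_const, Finset.card_univ, mul_comm]

lemma trace_flip : (flipOp d).trace = (d : ℂ) := by
  rw [Matrix.trace]
  simp only [Matrix.diag, flipOp, Fintype.sum_prod_type]
  have h : ∀ i j : Fin d, (if i = j ∧ j = i then (1:ℂ) else 0) = if i = j then 1 else 0 := by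
    intro i j; by_cases h : i = j <;> simp [h]
  simp only [h, Finset.sum_ite_eq, Finset.mem_univ, if_true, Finset.sum_const,
    Finset.card_univ, Fintype.card_fin, nsmul_eq_mul, mul_one]

lemma trace_Gm : (Gm d).trace = (d : ℂ) := by
  rw [Matrix.trace]
  simp only [Matrix.diag, Gm, Fintype.sum_prod_type]
  have h : ∀ i j : Fin d, (if i = j ∧ i = j then (1:ℂ) else 0) = if i = j then 1 else 0 := by
    intro i j; by_cases h : i = j <;> simp [h]
  simp only [h, Finset.sum_ite_eq, Finset.mem_univ, if_true, Finset.sum_const,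
    Finset.card_univ, Fintype.card_fin, nsmul_eq_mul, mul_one]

lemma trace_one' : (1 : Matrix (Fin d × Fin d) (Fin d × Fin d) ℂ).trace = (d : ℂ) ^ 2 := by
  rw [Matrix.trace_one]
  simp [Fintype.card_prod]
  ring

lemma ptranspose_one : ptranspose (1 : Matrix (Fin d × Fin d) (Fin d × Fin d) ℂ) = 1 := by
  funext p q
  simp only [ptranspose, Matrix.one_apply, Prod.ext_iff]
  by_cases h1 : p.1 = q.1 <;> by_cases h2 : p.2 = q.2 <;> simp [h1, h2, eq_comm]

lemma ptranspose_flip : ptranspose (flipOp d) = Gm d := by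
  funext p q
  simp [ptranspose, flipOp, Gm, eq_comm]

lemma ptranspose_Gm : ptranspose (Gm d) = flipOp d := by
  funext p q
  simp [ptranspose, flipOp, Gm, eq_comm]

variable {d}

lemma SymM_psd (hd : 0 < d) : (SymM d).PosSemidef := by
  refine psd_of_sq ?_ (κ := 2) (by norm_num) ?_
  · rw [SymM, Matrix.conjTranspose_add, Matrix.conjTranspose_one, flip_herm]
  · rw [show ((2:ℝ):ℂ) = 2 by norm_num]
    rw [SymM]
    simp only [Matrix.add_mul, Matrix.mul_add, Matrix.one_mul, Matrix.mul_one, flip_mul_flip]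
    module

lemma AsymM_psd (hd : 0 < d) : (AsymM d).PosSemidef := by
  refine psd_of_sq ?_ (κ := 2) (by norm_num) ?_
  · rw [AsymM, Matrix.conjTranspose_sub, Matrix.conjTranspose_one, flip_herm]
  · rw [show ((2:ℝ):ℂ) = 2 by norm_num]
    rw [AsymM]
    simp only [Matrix.sub_mul, Matrix.mul_sub, Matrix.one_mul, Matrix.mul_one, flip_mul_flip]
    module

lemma Gm_psd (hd : 0 < d) : (Gm d).PosSemidef := by
  refine psd_of_sq (Gm_herm d) (κ := d) (by exact_mod_cast hd) ?_
  rw [Gm_mul_Gm, show (((d:ℕ):ℝ):ℂ) = (d:ℂ) by push_cast; ring]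

lemma GcM_psd (hd : 0 < d) : (GcM d).PosSemidef := by
  refine psd_of_sq ?_ (κ := d) (by exact_mod_cast hd) ?_
  · rw [GcM, Matrix.conjTranspose_sub, Matrix.conjTranspose_smul, Matrix.conjTranspose_one,
      Gm_herm]
    norm_num
  · rw [show (((d:ℕ):ℝ):ℂ) = (d:ℂ) by push_cast; ring]
    rw [GcM]
    simp only [Matrix.sub_mul, Matrix.mul_sub, Matrix.smul_mul, Matrix.mul_smul,
      Matrix.one_mul, Matrix.mul_one, Gm_mul_Gm]
    module

lemma psd_smul_real {n : Type} [Fintype n] {M : Matrix n n ℂ} (hM : M.PosSemidef)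
    {r : ℝ} (hr : 0 ≤ r) : ((r : ℂ) • M).PosSemidef := by
  obtain ⟨B, rfl⟩ := psd_eq_ct hM
  have : (r : ℂ) • (Bᴴ * B) = ((((Real.sqrt r : ℝ) : ℂ)) • B)ᴴ * ((((Real.sqrt r : ℝ) : ℂ)) • B) := by
    rw [Matrix.conjTranspose_smul, Matrix.smul_mul, Matrix.mul_smul, smul_smul,
      Complex.star_def, Complex.conj_ofReal, ← Complex.ofReal_mul,
      Real.mul_self_sqrt hr]
  rw [this]
  exact Matrix.posSemidef_conjTranspose_mul_self _

end Aux2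
-- AUX2 END

-- AUX3 BEGIN
noncomputable section Aux3

set_option linter.unusedSectionVars false
set_option maxHeartbeats 1000000

open Matrix

section Kbilin

variable {A B C D : Type} [Fintype A] [DecidableEq A] [Fintype B] [DecidableEq B]
  [Fintype C] [DecidableEq C] [Fintype D] [DecidableEq D]

lemma K_add_left (U U' : Matrix (A × B) (A × B) ℂ) (V : Matrix (C × D) (C × D) ℂ) :
    K (U + U') V = K U V + K U' V := by
  funext p q; simp [K, add_mul]

lemma K_add_right (U : Matrix (A × B) (A × B) ℂ) (V V' : Matrix (C × D) (C × D) ℂ) :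
    K U (V + V') = K U V + K U V' := by
  funext p q; simp [K, mul_add]

lemma K_sub_left (U U' : Matrix (A × B) (A × B) ℂ) (V : Matrix (C × D) (C × D) ℂ) :
    K (U - U') V = K U V - K U' V := by
  funext p q; simp [K, sub_mul]

lemma K_sub_right (U : Matrix (A × B) (A × B) ℂ) (V V' : Matrix (C × D) (C × D) ℂ) :
    K U (V - V') = K U V - K U V' := by
  funext p q; simp [K, mul_sub]

lemma K_smul_left (c : ℂ) (U : Matrix (A × B) (A × B) ℂ) (V : Matrix (C × D) (C × D) ℂ) :
    K (c • U) V = c • K U V := by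
  funext p q; simp [K]; ring

lemma K_smul_right (c : ℂ) (U : Matrix (A × B) (A × B) ℂ) (V : Matrix (C × D) (C × D) ℂ) :
    K U (c • V) = c • K U V := by
  funext p q; simp [K]; ring

lemma ptranspose_sub (M N : Matrix (A × B) (A × B) ℂ) :
    ptranspose (M - N) = ptranspose M - ptranspose N := rfl

end Kbilin

variable (d : ℕ) (p : ℝ)

def sR : ℝ := ((d:ℝ) + 1 - 2*p) / ((d:ℝ) * ((d:ℝ)^2 - 1))
def tR : ℝ := (2*p*(d:ℝ) - (d:ℝ) - 1) / ((d:ℝ) * ((d:ℝ)^2 - 1))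
def cpR : ℝ := ((d:ℝ)/2) * (sR d p + tR d p)^2
def cmR : ℝ := ((d:ℝ)/2) * ((sR d p)^2 + 2*(sR d p)*(tR d p) - (tR d p)^2) + (sR d p)^2
def rrR : ℝ := 1 + 2*(2*p - 1) - (((d:ℝ) + 2)/(d:ℝ)) * (2*p - 1)^2

def Xmat : Matrix ((Fin d × Fin d) × (Fin d × Fin d)) ((Fin d × Fin d) × (Fin d × Fin d)) ℂ :=
  (((sR d p)^2/(2*(d:ℝ)) : ℝ) : ℂ) • K (AsymM d) (GcM d)
    + ((cpR d p/(2*(d:ℝ)) : ℝ) : ℂ) • K (SymM d) (Gm d)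
    + ((cmR d p/(2*(d:ℝ)) : ℝ) : ℂ) • K (AsymM d) (Gm d)

def Zmat : Matrix ((Fin d × Fin d) × (Fin d × Fin d)) ((Fin d × Fin d) × (Fin d × Fin d)) ℂ :=
  (((sR d p)^2/(2*(d:ℝ)) : ℝ) : ℂ) • K (GcM d) (AsymM d)
    + ((cpR d p/(2*(d:ℝ)) : ℝ) : ℂ) • K (Gm d) (SymM d)
    + ((cmR d p/(2*(d:ℝ)) : ℝ) : ℂ) • K (Gm d) (AsymM d)

def rhoW : Matrix ((Fin d × Fin d) × (Fin d × Fin d)) ((Fin d × Fin d) × (Fin d × Fin d)) ℂ :=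
  ((((d:ℝ))⁻¹ : ℝ) : ℂ) • K (SymM d) (GcM d)
    + (((((d:ℝ))+1)/(d:ℝ) : ℝ) : ℂ) • K (AsymM d) (Gm d)

def sigW : Matrix ((Fin d × Fin d) × (Fin d × Fin d)) ((Fin d × Fin d) × (Fin d × Fin d)) ℂ :=
  ((((d:ℝ))⁻¹ : ℝ) : ℂ) • K (GcM d) (SymM d)
    + (((((d:ℝ))+1)/(d:ℝ) : ℝ) : ℂ) • K (Gm d) (AsymM d)

lemma ptranspose_SymM : ptranspose (SymM d) = 1 + Gm d := by
  rw [SymM, ptranspose_add, ptranspose_one, ptranspose_flip]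

lemma ptranspose_AsymM : ptranspose (AsymM d) = 1 - Gm d := by
  rw [AsymM, ptranspose_sub, ptranspose_one, ptranspose_flip]

lemma ptranspose_GcM : ptranspose (GcM d) = (d : ℂ) • 1 - flipOp d := by
  rw [GcM, ptranspose_sub, ptranspose_smul, ptranspose_one, ptranspose_Gm]

section WithHd

variable (hd : 2 ≤ d)
include hd

lemma hdC0 : ((d:ℕ) : ℂ) ≠ 0 := Nat.cast_ne_zero.mpr (by omega)

lemma hdC1 : ((d:ℕ) : ℂ) - 1 ≠ 0 := by
  have : ((d:ℕ) : ℂ) ≠ 1 := by exact_mod_cast (by omega : d ≠ 1)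
  exact sub_ne_zero.mpr this

lemma hdC2 : ((d:ℕ) : ℂ) + 1 ≠ 0 := by
  have : ((d:ℕ) : ℂ) + 1 = ((d + 1 : ℕ) : ℂ) := by push_cast; ring
  rw [this]
  exact Nat.cast_ne_zero.mpr (by omega)

lemma hdC3 : -((d:ℕ):ℂ) + ((d:ℕ):ℂ)^3 ≠ 0 := by
  have h0 := hdC0 d hd; have h1 := hdC1 d hd; have h2 := hdC2 d hd
  have : -((d:ℕ):ℂ) + ((d:ℕ):ℂ)^3 = ((d:ℕ):ℂ) * (((d:ℕ):ℂ) - 1) * (((d:ℕ):ℂ) + 1) := by ring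
  rw [this]
  exact mul_ne_zero (mul_ne_zero h0 h1) h2

lemma hdC4 : -((d:ℕ):ℂ)^2 + ((d:ℕ):ℂ)^4 ≠ 0 := by
  have h0 := hdC0 d hd; have h1 := hdC1 d hd; have h2 := hdC2 d hd
  have : -((d:ℕ):ℂ)^2 + ((d:ℕ):ℂ)^4 = ((d:ℕ):ℂ) * ((d:ℕ):ℂ) * (((d:ℕ):ℂ) - 1) * (((d:ℕ):ℂ) + 1) := by ring
  rw [this]
  exact mul_ne_zero (mul_ne_zero (mul_ne_zero h0 h0) h1) h2

lemma hdC5 : ((d:ℕ):ℂ)^2 - 1 ≠ 0 := by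
  have h1 := hdC1 d hd; have h2 := hdC2 d hd
  have : ((d:ℕ):ℂ)^2 - 1 = (((d:ℕ):ℂ) - 1) * (((d:ℕ):ℂ) + 1) := by ring
  rw [this]
  exact mul_ne_zero h1 h2

lemma wernerState_expand :
    wernerState d p = ((sR d p : ℝ) : ℂ) • 1 + ((tR d p : ℝ) : ℂ) • flipOp d := by
  have h0 := hdC0 d hd; have h1 := hdC1 d hd; have h2 := hdC2 d hd
  have h5 := hdC5 d hd
  have hexp : ∀ a b : ℂ, a • Psym d + b • Pasym d
      = ((a + b)/2) • (1 : Matrix (Fin d × Fin d) (Fin d × Fin d) ℂ)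
        + ((a - b)/2) • flipOp d := by
    intro a b
    rw [Psym, Pasym]
    match_scalars <;> ring
  have hs : ((p:ℂ) / ((d:ℂ) * ((d:ℂ) + 1) / 2) + (((1 - p : ℝ)):ℂ) / ((d:ℂ) * ((d:ℂ) - 1) / 2)) / 2
      = ((sR d p : ℝ) : ℂ) := by
    rw [sR]; push_cast; field_simp; ring
  have ht : ((p:ℂ) / ((d:ℂ) * ((d:ℂ) + 1) / 2) - (((1 - p : ℝ)):ℂ) / ((d:ℂ) * ((d:ℂ) - 1) / 2)) / 2
      = ((tR d p : ℝ) : ℂ) := by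
    rw [tR]; push_cast; field_simp; ring
  rw [wernerState, hexp, hs, ht]

lemma wernerState_pt_expand :
    ptranspose (wernerState d p) = ((sR d p : ℝ) : ℂ) • 1 + ((tR d p : ℝ) : ℂ) • Gm d := by
  rw [wernerState_expand d p hd, ptranspose_add, ptranspose_smul, ptranspose_smul,
    ptranspose_one, ptranspose_flip]

lemma choi_eq :
    choi (mapTensor (wernerMap d p) (transposeMap (Fin d) ∘ₗ wernerMap d p))
      = K (((sR d p : ℝ) : ℂ) • 1 + ((tR d p : ℝ) : ℂ) • flipOp d)
          (((sR d p : ℝ) : ℂ) • 1 + ((tR d p : ℝ) : ℂ) • Gm d) := by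
  rw [choi_mapTensor, choi_transpose_comp]
  simp only [wernerMap]
  rw [choi_ofChoi, wernerState_expand d p hd, ptranspose_add, ptranspose_smul,
    ptranspose_smul, ptranspose_one, ptranspose_flip]

lemma main_identity :
    K (((sR d p : ℝ) : ℂ) • 1 + ((tR d p : ℝ) : ℂ) • flipOp d)
        (((sR d p : ℝ) : ℂ) • 1 + ((tR d p : ℝ) : ℂ) • Gm d)
      = Xmat d p + ptranspose (Zmat d p) := by
  have h0 := hdC0 d hd; have h1 := hdC1 d hd; have h2 := hdC2 d hd
  have h3 := hdC3 d hd; have h4 := hdC4 d hd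
  simp only [Xmat, Zmat, ptranspose_add, ptranspose_sub, ptranspose_smul, ptranspose_K, ptranspose_SymM,
    ptranspose_AsymM, ptranspose_GcM, ptranspose_Gm, ptranspose_one, ptranspose_flip,
    SymM, AsymM, GcM, cpR, cmR, K_add_left, K_add_right, K_sub_left, K_sub_right,
    K_smul_left, K_smul_right]
  match_scalars
  all_goals push_cast
  all_goals field_simp [h0, h1, h2, h3, h4]
  all_goals try ring

lemma pt_rho : ptranspose (rhoW d) = sigW d := by
  have h0 := hdC0 d hd; have h1 := hdC1 d hd; have h2 := hdC2 d hd
  have h3 := hdC3 d hd; have h4 := hdC4 d hd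
  simp only [rhoW, sigW, ptranspose_add, ptranspose_sub, ptranspose_smul, ptranspose_K, ptranspose_SymM,
    ptranspose_AsymM, ptranspose_GcM, ptranspose_Gm, ptranspose_one, ptranspose_flip,
    SymM, AsymM, GcM, K_add_left, K_add_right, K_sub_left, K_sub_right,
    K_smul_left, K_smul_right]
  match_scalars
  all_goals push_cast
  all_goals field_simp [h0, h1, h2, h3, h4]
  all_goals try ring

lemma trace_main :
    (K (((sR d p : ℝ) : ℂ) • 1 + ((tR d p : ℝ) : ℂ) • flipOp d)
        (((sR d p : ℝ) : ℂ) • 1 + ((tR d p : ℝ) : ℂ) • Gm d) * rhoW d).trace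
      = ((rrR d p : ℝ) : ℂ) := by
  have h0 := hdC0 d hd; have h1 := hdC1 d hd; have h2 := hdC2 d hd
  have h3 := hdC3 d hd; have h4 := hdC4 d hd
  rw [rhoW, Matrix.mul_add, Matrix.mul_smul, Matrix.mul_smul, Matrix.trace_add,
    Matrix.trace_smul, Matrix.trace_smul, K_mul, K_mul, K_trace, K_trace]
  simp only [SymM, AsymM, GcM, Matrix.mul_add, Matrix.add_mul, Matrix.mul_sub,
    Matrix.sub_mul, Matrix.smul_mul, Matrix.mul_smul, Matrix.one_mul, Matrix.mul_one,
    flip_mul_flip, flip_mul_Gm, Gm_mul_flip, Gm_mul_Gm, Matrix.trace_add,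
    Matrix.trace_sub, Matrix.trace_smul, trace_flip, trace_Gm, trace_one']
  simp only [smul_eq_mul, sR, tR, rrR]
  have h5 := hdC5 d hd
  push_cast
  field_simp [h0, h2, h5]
  ring

end WithHd

lemma Xmat_psd (hd0 : 0 < d) (hcm : 0 ≤ cmR d p) : (Xmat d p).PosSemidef := by
  have hdr : (0:ℝ) < (d:ℝ) := by exact_mod_cast hd0
  refine ((psd_smul_real (K_posSemidef (AsymM_psd hd0) (GcM_psd hd0)) ?_).add
    (psd_smul_real (K_posSemidef (SymM_psd hd0) (Gm_psd hd0)) ?_)).add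
    (psd_smul_real (K_posSemidef (AsymM_psd hd0) (Gm_psd hd0)) ?_)
  · positivity
  · unfold cpR; positivity
  · exact div_nonneg hcm (by positivity)

lemma Zmat_psd (hd0 : 0 < d) (hcm : 0 ≤ cmR d p) : (Zmat d p).PosSemidef := by
  have hdr : (0:ℝ) < (d:ℝ) := by exact_mod_cast hd0
  refine ((psd_smul_real (K_posSemidef (GcM_psd hd0) (AsymM_psd hd0)) ?_).add
    (psd_smul_real (K_posSemidef (Gm_psd hd0) (SymM_psd hd0)) ?_)).add
    (psd_smul_real (K_posSemidef (Gm_psd hd0) (AsymM_psd hd0)) ?_)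
  · positivity
  · unfold cpR; positivity
  · exact div_nonneg hcm (by positivity)

lemma rho_psd (hd0 : 0 < d) : (rhoW d).PosSemidef := by
  have hdr : (0:ℝ) < (d:ℝ) := by exact_mod_cast hd0
  exact (psd_smul_real (K_posSemidef (SymM_psd hd0) (GcM_psd hd0)) (by positivity)).add
    (psd_smul_real (K_posSemidef (AsymM_psd hd0) (Gm_psd hd0)) (by positivity))

lemma sig_psd (hd0 : 0 < d) : (sigW d).PosSemidef := by
  have hdr : (0:ℝ) < (d:ℝ) := by exact_mod_cast hd0
  exact (psd_smul_real (K_posSemidef (GcM_psd hd0) (SymM_psd hd0)) (by positivity)).add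
    (psd_smul_real (K_posSemidef (Gm_psd hd0) (AsymM_psd hd0)) (by positivity))

lemma cm_nonneg (hd : 2 ≤ d) (hp1 : p ≤ 1)
    (h : 1 / (2 + Real.sqrt (2 * (d:ℝ) / ((d:ℝ) + 1))) ≤ p) : 0 ≤ cmR d p := by
  set u := Real.sqrt (2 * (d:ℝ) / ((d:ℝ) + 1)) with hu
  have hd2 : (2:ℝ) ≤ (d:ℝ) := by exact_mod_cast hd
  have hdr : (0:ℝ) < (d:ℝ) := by linarith
  have hu0 : 0 ≤ u := Real.sqrt_nonneg _
  have hu2 : u * u = 2 * (d:ℝ) / ((d:ℝ) + 1) := Real.mul_self_sqrt (by positivity)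
  have hu2' : u * u * ((d:ℝ) + 1) = 2 * (d:ℝ) := by
    rw [hu2]; field_simp
  have h2u : (0:ℝ) < 2 + u := by linarith
  have hp' : 1 ≤ p * (2 + u) := by
    rw [div_le_iff₀ h2u] at h; linarith
  have h4 : 2 < u * ((d:ℝ) + 1) := by nlinarith [hu2', hu0]
  have hA : u * ((d:ℝ) + 1) * (1 - p) ≤ (d:ℝ) + 1 - 2*p := by
    have h9 : 0 ≤ (u * ((d:ℝ)+1) - 2) * (p * (2+u) - 1) :=
      mul_nonneg (by linarith) (by linarith)
    have heq : (2+u) * (((d:ℝ) + 1 - 2*p) - u * ((d:ℝ)+1) * (1-p))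
        = (u * ((d:ℝ)+1) - 2) * (p * (2+u) - 1) + (2*(d:ℝ) - u*u*((d:ℝ)+1)) := by ring
    nlinarith [h9, heq, hu2', h2u]
  have hA1 : 0 ≤ u * ((d:ℝ)+1) * (1 - p) :=
    mul_nonneg (mul_nonneg hu0 (by linarith)) (by linarith)
  have hAsq : 2*(d:ℝ)*((d:ℝ)+1)*(1-p)^2 ≤ ((d:ℝ) + 1 - 2*p)^2 := by
    nlinarith [mul_self_le_mul_self hA1 hA, hu2', sq_nonneg (1-p)]
  have hm : ((d:ℝ) * ((d:ℝ)^2 - 1)) ≠ 0 := by nlinarith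
  have hcm_eq : cmR d p = ((d:ℝ)+1) * (((d:ℝ) + 1 - 2*p)^2 - 2*(d:ℝ)*((d:ℝ)+1)*(1-p)^2)
      / ((d:ℝ) * ((d:ℝ)^2 - 1))^2 := by
    rw [cmR, sR, tR]; field_simp; ring
  rw [hcm_eq]
  apply div_nonneg
  · exact mul_nonneg (by linarith) (by linarith)
  · positivity

lemma rr_neg (hd : 2 ≤ d)
    (h : p < 1 / (2 + Real.sqrt (2 * (d:ℝ) / ((d:ℝ) + 1)))) : rrR d p < 0 := by
  set u := Real.sqrt (2 * (d:ℝ) / ((d:ℝ) + 1)) with hu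
  have hd2 : (2:ℝ) ≤ (d:ℝ) := by exact_mod_cast hd
  have hdr : (0:ℝ) < (d:ℝ) := by linarith
  have hu0 : 0 < u := Real.sqrt_pos.mpr (by positivity)
  have hu2 : u * u = 2 * (d:ℝ) / ((d:ℝ) + 1) := Real.mul_self_sqrt (by positivity)
  have hu2' : u * u * ((d:ℝ) + 1) = 2 * (d:ℝ) := by
    rw [hu2]; field_simp
  have h2u : (0:ℝ) < 2 + u := by linarith
  have hpu : p * (2 + u) < 1 := by
    rw [lt_div_iff₀ h2u] at h; exact h
  have hw : u < (1 - 2*p) * (2 + u) := by nlinarith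
  have hw0 : 0 < 1 - 2*p := by nlinarith
  have key : 0 < ((1-2*p)*(2+u) - u) * (((d:ℝ)+2)*((1-2*p)*(2+u)+u) + 2*(d:ℝ)*(2+u)) := by
    apply mul_pos (by linarith)
    nlinarith [hw0, hu0.le, h2u]
  have hkey2 : ((2+u)^2) * (((d:ℝ)+2)*(1-2*p)^2 + 2*(d:ℝ)*(1-2*p) - (d:ℝ))
      = ((1-2*p)*(2+u) - u) * (((d:ℝ)+2)*((1-2*p)*(2+u)+u) + 2*(d:ℝ)*(2+u)) := by
    linear_combination (2:ℝ) * hu2'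
  have hF : 0 < ((d:ℝ)+2)*(1-2*p)^2 + 2*(d:ℝ)*(1-2*p) - (d:ℝ) := by
    nlinarith [key, hkey2, sq_nonneg (2+u), h2u]
  have hdr' : (d:ℝ) * rrR d p = -(((d:ℝ)+2)*(1-2*p)^2 + 2*(d:ℝ)*(1-2*p) - (d:ℝ)) := by
    rw [rrR]; field_simp; ring
  nlinarith [hF, hdr', hdr]

end Aux3
-- AUX3 END

theorem stmt11 (d : ℕ) (hd : 2 ≤ d) (p : ℝ) (hp : p ∈ Set.Icc (0 : ℝ) 1) :
    IsDecomposable (mapTensor (wernerMap d p) (transposeMap (Fin d) ∘ₗ wernerMap d p)) ↔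
      1 / (2 + Real.sqrt (2 * (d : ℝ) / ((d : ℝ) + 1))) ≤ p := by
  obtain ⟨hp0, hp1⟩ := hp
  have hd0 : 0 < d := by omega
  constructor
  · intro hdec
    by_contra hlt
    push_neg at hlt
    obtain ⟨T₁, T₂, hT₁, hT₂, hsum⟩ := hdec
    have hchoi : choi (mapTensor (wernerMap d p) (transposeMap (Fin d) ∘ₗ wernerMap d p))
        = choi T₁ + ptranspose (choi T₂) := by
      rw [hsum, choi_add, choi_transpose_comp]
    have h1 : 0 ≤ (choi T₁ * rhoW d).trace := trace_mul_nonneg hT₁ (rho_psd d hd0)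
    have h2 : 0 ≤ (choi T₂ * sigW d).trace := trace_mul_nonneg hT₂ (sig_psd d hd0)
    have h3 : (ptranspose (choi T₂) * rhoW d).trace = (choi T₂ * sigW d).trace := by
      rw [trace_ptranspose_mul, pt_rho d hd]
    have h4 : (choi (mapTensor (wernerMap d p) (transposeMap (Fin d) ∘ₗ wernerMap d p))
        * rhoW d).trace = ((rrR d p : ℝ) : ℂ) := by
      rw [choi_eq d p hd]
      exact trace_main d p hd
    have h5 : (0 : ℂ) ≤ ((rrR d p : ℝ) : ℂ) := by
      rw [← h4, hchoi, Matrix.add_mul, Matrix.trace_add, h3]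
      exact add_nonneg h1 h2
    have h6 : (0 : ℝ) ≤ rrR d p := Complex.zero_le_real.mp h5
    exact absurd h6 (not_le.mpr (rr_neg d p hd hlt))
  · intro hth
    have hcm : 0 ≤ cmR d p := cm_nonneg d p hd hp1 hth
    refine ⟨ofChoi (Xmat d p), ofChoi (Zmat d p), ?_, ?_, ?_⟩
    · show (choi (ofChoi (Xmat d p))).PosSemidef
      rw [choi_ofChoi]
      exact Xmat_psd d p hd0 hcm
    · show (choi (ofChoi (Zmat d p))).PosSemidef
      rw [choi_ofChoi]
      exact Zmat_psd d p hd0 hcm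
    · have hch : choi (mapTensor (wernerMap d p) (transposeMap (Fin d) ∘ₗ wernerMap d p))
          = choi (ofChoi (Xmat d p) + transposeMap (Fin d × Fin d) ∘ₗ ofChoi (Zmat d p)) := by
        rw [choi_add, choi_transpose_comp, choi_ofChoi, choi_ofChoi, choi_eq d p hd,
          main_identity d p hd]
      calc mapTensor (wernerMap d p) (transposeMap (Fin d) ∘ₗ wernerMap d p)
          = ofChoi (choi (mapTensor (wernerMap d p) (transposeMap (Fin d) ∘ₗ wernerMap d p))) :=
            (ofChoi_choi _).symm
        _ = ofChoi (choi (ofChoi (Xmat d p) + transposeMap (Fin d × Fin d) ∘ₗ ofChoi (Zmat d p))) := by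
            rw [hch]
        _ = ofChoi (Xmat d p) + transposeMap (Fin d × Fin d) ∘ₗ ofChoi (Zmat d p) := ofChoi_choi _

end TensorDecomp
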